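/- arXiv:1602.02560 — 5 statements merged into one kernel-verified Lean document; each statement's English description precedes it below -/
import Mathlib

section
/- Let Q : ℝ⁴ → ℝ be the Minkowski quadratic form Q(x) = x₀² − x₁² − x₂² − x₃². If Γ : ℝ⁴ → ℂ is continuous, positive definite, and satisfies Γ(g x) = Γ(x) for every linear map g : ℝ⁴ → ℝ⁴ with det g = 1 and Q(g x) = Q(x) for all x ∈ ℝ⁴ (i.e. Γ is invariant under the Lorentz group SO(3,1)), then Γ is constant. -/
open scoped ComplexOrder

/-- A function `Γ : E → ℂ` is positive definite if for all finite families of points and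
complex coefficients, `∑ᵢⱼ cᵢ c̄ⱼ Γ(xᵢ - xⱼ)` is a nonnegative real number. -/
def IsPosDefFn {E : Type*} [AddCommGroup E] (Γ : E → ℂ) : Prop :=
  ∀ (n : ℕ) (x : Fin n → E) (c : Fin n → ℂ),
    0 ≤ ∑ i, ∑ j, c i * (starRingEnd ℂ) (c j) * Γ (x i - x j)

/-- The Minkowski quadratic form on `ℝ⁴`. -/
def minkowskiQ (x : Fin 4 → ℝ) : ℝ := x 0 ^ 2 - x 1 ^ 2 - x 2 ^ 2 - x 3 ^ 2

/-!
If `Γ` is positive definite and `Γ u = Γ 0`, then `u` is a period of `Γ`: in the Gram matrix of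
the points `x, -u, 0` the vector `w = (0, 1, -1)` has `w* M w = 2 Γ 0 - Γ u - Γ (-u) = 0`, so it lies
in the kernel, and the first row of `M w = 0` reads `Γ (x + u) = Γ x`.
A boost rescales the light-like vector `e₀ ± eₖ` by `e^{∓s}`, so a Lorentz invariant `Γ` is
constant along its ray and, by continuity, equal to `Γ 0` there. These rays generate `ℝ⁴` as a
group, hence every vector is a period.
-/

open Matrix ComplexConjugate

def periodAddSubgroup {α β : Type*} [AddGroup α] (f : α → β) : AddSubgroup α where
  carrier := {c | Function.Periodic f c}
  add_mem' := Function.Periodic.add_period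
  zero_mem' x := by rw [add_zero]
  neg_mem' := Function.Periodic.neg

namespace IsPosDefFn

variable {E : Type*} [AddCommGroup E] {Γ : E → ℂ}

lemma apply_zero_nonneg (h : IsPosDefFn Γ) : 0 ≤ Γ 0 := by
  simpa using h 1 (fun _ ↦ 0) (fun _ ↦ 1)

lemma map_neg (h : IsPosDefFn Γ) (x : E) : Γ (-x) = conj (Γ x) := by
  have h₀ : (Γ 0).im = 0 := (Complex.nonneg_iff.mp h.apply_zero_nonneg).2.symm
  -- the imaginary parts of the sums for `c = (1, 1)` and `c = (1, i)` vanish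
  have h₁ := Complex.nonneg_iff.mp (h 2 ![0, x] ![1, 1])
  have h₂ := Complex.nonneg_iff.mp (h 2 ![0, x] ![1, Complex.I])
  simp [Fin.sum_univ_two, h₀] at h₁ h₂
  apply Complex.ext <;> simp <;> linarith [h₁.2, h₂.2]

lemma posSemidef_gram (h : IsPosDefFn Γ) {n : ℕ} (p : Fin n → E) :
    (Matrix.of fun i j ↦ Γ (p i - p j)).PosSemidef := by
  refine .of_dotProduct_mulVec_nonneg ?_ fun c ↦ ?_
  · ext i j
    simp [← h.map_neg]
  · convert h n p (star c) using 1
    simp only [dotProduct, mulVec, Finset.mul_sum]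
    refine Finset.sum_congr rfl fun i _ ↦ Finset.sum_congr rfl fun j _ ↦ ?_
    simp only [of_apply, Pi.star_apply, RCLike.star_def, Complex.conj_conj]
    ring

lemma periodic_of_apply_eq_apply_zero (h : IsPosDefFn Γ) {u : E} (hu : Γ u = Γ 0) :
    Function.Periodic Γ u := by
  intro x
  have hneg : Γ (-u) = Γ 0 := by
    rw [h.map_neg, hu]
    exact (IsSelfAdjoint.of_nonneg h.apply_zero_nonneg).star_eq
  have hM := h.posSemidef_gram ![x, -u, 0]
  have hw := congrFun ((hM.dotProduct_mulVec_zero_iff ![0, 1, -1]).mp ?_) 0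
  · simpa [mulVec, dotProduct, Fin.sum_univ_three, add_neg_eq_zero] using hw
  · simp [mulVec, dotProduct, Fin.sum_univ_three, hu, hneg]

end IsPosDefFn

lemma Continuous.apply_eq_apply_zero_of_forall_exp_smul {E X : Type*} [TopologicalSpace E]
    [AddCommGroup E] [Module ℝ E] [ContinuousSMul ℝ E] [TopologicalSpace X] [T2Space X]
    {f : E → X} (hf : Continuous f) {v : E} (h : ∀ s : ℝ, f (Real.exp s • v) = f v) :
    f v = f 0 := by
  have hlim : Filter.Tendsto (fun s : ℝ ↦ Real.exp s • v) Filter.atBot (nhds 0) := by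
    simpa using Real.tendsto_exp_atBot.smul_const v
  exact tendsto_nhds_unique tendsto_const_nhds (((hf.tendsto 0).comp hlim).congr h)

noncomputable def boost (k : Fin 3) (s : ℝ) : Matrix (Fin 4) (Fin 4) ℝ :=
  1 + (Real.cosh s - 1) • (single 0 0 1 + single k.succ k.succ 1)
    - Real.sinh s • (single 0 k.succ 1 + single k.succ 0 1)

lemma det_boost (k : Fin 3) (s : ℝ) : (boost k s).det = 1 := by
  fin_cases k <;>
    simp [boost, det_succ_row_zero, Fin.sum_univ_succ, Fin.succAbove, single_apply,
      one_apply] <;>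
    nlinarith [Real.cosh_sq_sub_sinh_sq s]

lemma minkowskiQ_boost_mulVec (k : Fin 3) (s : ℝ) (x : Fin 4 → ℝ) :
    minkowskiQ (boost k s *ᵥ x) = minkowskiQ x := by
  fin_cases k <;>
    simp [boost, minkowskiQ, mulVec, dotProduct, Fin.sum_univ_four, single_apply, one_apply] <;>
    nlinarith [Real.cosh_sq_sub_sinh_sq s]

lemma boost_mulVec_add (k : Fin 3) (s : ℝ) :
    boost k s *ᵥ (Pi.single 0 1 + Pi.single k.succ 1) =
      Real.exp (-s) • (Pi.single 0 1 + Pi.single k.succ 1) := by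
  ext i
  fin_cases k <;> fin_cases i <;>
    simp [boost, mulVec, dotProduct, Fin.sum_univ_four, single_apply, one_apply,
      Real.cosh_eq, Real.sinh_eq] <;>
    ring

lemma boost_mulVec_sub (k : Fin 3) (s : ℝ) :
    boost k s *ᵥ (Pi.single 0 1 - Pi.single k.succ 1) =
      Real.exp s • (Pi.single 0 1 - Pi.single k.succ 1) := by
  ext i
  fin_cases k <;> fin_cases i <;>
    simp [boost, mulVec, dotProduct, Fin.sum_univ_four, single_apply, one_apply,
      Real.cosh_eq, Real.sinh_eq] <;>
    ring

lemma Continuous.apply_smul_lightlike_eq_apply_zero {X : Type*} [TopologicalSpace X] [T2Space X]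
    {f : (Fin 4 → ℝ) → X} (hf : Continuous f) (hinv : ∀ k s x, f (boost k s *ᵥ x) = f x)
    (k : Fin 3) (r : ℝ) :
    f (r • (Pi.single 0 1 + Pi.single k.succ 1)) = f 0 ∧
      f (r • (Pi.single 0 1 - Pi.single k.succ 1)) = f 0 := by
  constructor <;> refine hf.apply_eq_apply_zero_of_forall_exp_smul fun s ↦ ?_
  · rw [← hinv k (-s) (r • _), mulVec_smul, boost_mulVec_add, neg_neg, smul_comm]
  · rw [← hinv k s (r • _), mulVec_smul, boost_mulVec_sub, smul_comm]

lemma AddSubgroup.eq_top_of_smul_lightlike_mem (P : AddSubgroup (Fin 4 → ℝ))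
    (h : ∀ (k : Fin 3) (r : ℝ), r • (Pi.single 0 1 + Pi.single k.succ 1) ∈ P ∧
      r • (Pi.single 0 1 - Pi.single k.succ 1) ∈ P) :
    P = ⊤ := by
  have hsingle (i : Fin 4) (r : ℝ) : Pi.single i r ∈ P := by
    induction i using Fin.cases with
    | zero =>
      convert P.add_mem (h 0 (r / 2)).1 (h 0 (r / 2)).2 using 1
      ext j; fin_cases j <;> simp
    | succ k =>
      convert P.sub_mem (h k (r / 2)).1 (h k (r / 2)).2 using 1
      ext j; fin_cases j <;> fin_cases k <;> simp
  refine (eq_top_iff' P).mpr fun x ↦ ?_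
  rw [← Finset.univ_sum_single x]
  exact P.sum_mem fun i _ ↦ hsingle i (x i)

/-- **Corollary 3.1 (analytic form).** A continuous positive definite function on `ℝ⁴` which is
invariant under the Lorentz group `SO(3,1)` is constant. -/
theorem lorentz_invariant_posdef_is_constant
    (Γ : (Fin 4 → ℝ) → ℂ) (hΓcont : Continuous Γ) (hΓpd : IsPosDefFn Γ)
    (hΓinv : ∀ g : (Fin 4 → ℝ) →ₗ[ℝ] (Fin 4 → ℝ), LinearMap.det g = 1 →
      (∀ x, minkowskiQ (g x) = minkowskiQ x) → ∀ x, Γ (g x) = Γ x) :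
    ∀ x y : Fin 4 → ℝ, Γ x = Γ y := by
  have hboost (k : Fin 3) (s : ℝ) : ∀ x, Γ (boost k s *ᵥ x) = Γ x :=
    hΓinv (toLin' (boost k s)) (by rw [LinearMap.det_toLin', det_boost])
      (minkowskiQ_boost_mulVec k s)
  have htop : periodAddSubgroup Γ = ⊤ :=
    AddSubgroup.eq_top_of_smul_lightlike_mem _ fun k r ↦
      (hΓcont.apply_smul_lightlike_eq_apply_zero hboost k r).imp
        hΓpd.periodic_of_apply_eq_apply_zero hΓpd.periodic_of_apply_eq_apply_zero
  have hconst (x : Fin 4 → ℝ) : Γ x = Γ 0 := by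
    have hx : x ∈ periodAddSubgroup Γ := htop ▸ AddSubgroup.mem_top x
    simpa using hx 0
  intro x y
  rw [hconst x, hconst y]
end

section
/- Let the Galilei group act on ℝ³ × ℝ by the affine maps (x, t) ↦ (A x + t v + b, t + s) with A ∈ SO(3), v, b ∈ ℝ³, s ∈ ℝ. Let Φ = (Φ(x,t))_{(x,t)∈ℝ³×ℝ} be a standard real-valued Gaussian random field on ℝ³ × ℝ with almost surely continuous sample paths, whose finite-dimensional distributions are invariant under the Galilei group. Then Φ loses all space dependence: for every (x, t) ∈ ℝ³ × ℝ, Φ(x, t) = Φ(0, t) almost surely. -/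
open MeasureTheory ProbabilityTheory Matrix Filter
open scoped NNReal Topology

/-!
A Galilei boost fixing the time slice `{s}` pointwise sends `(0, t)` to `(x, t)` for any `x`
once `s ≠ t`, so `Φ(x,t) - Φ(0,s)` and `Φ(0,t) - Φ(0,s)` have the same law. As `s → t` the
latter tends to `0` almost surely by continuity of the paths, hence in probability, and so does
the former; but the former tends to `Φ(x,t) - Φ(0,t)` almost surely, which therefore vanishes.
-/

section ConvergenceInMeasure

variable {α ι E : Type*} {m : MeasurableSpace α} {μ : Measure α}

theorem tendstoInMeasure_const_of_map_eq [PseudoEMetricSpace E] [MeasurableSpace E]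
    [OpensMeasurableSpace E] {f g : ι → α → E} {l : Filter ι} {c : E}
    (hf : ∀ i, AEMeasurable (f i) μ) (hg : ∀ i, AEMeasurable (g i) μ)
    (hfg : ∀ i, μ.map (f i) = μ.map (g i)) (h : TendstoInMeasure μ g l fun _ => c) :
    TendstoInMeasure μ f l fun _ => c := by
  intro ε hε
  have hS : MeasurableSet {y : E | ε ≤ edist y c} :=
    (isClosed_le continuous_const (continuous_id.edist continuous_const)).measurableSet
  convert h ε hε using 2 with i
  change μ (f i ⁻¹' {y | ε ≤ edist y c}) = μ (g i ⁻¹' {y | ε ≤ edist y c})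
  rw [← Measure.map_apply_of_aemeasurable (hf i) hS, hfg i,
    Measure.map_apply_of_aemeasurable (hg i) hS]

theorem ae_eq_of_map_sub_eq_of_tendsto_ae [NormedAddCommGroup E] [MeasurableSpace E]
    [BorelSpace E] [IsFiniteMeasure μ] {X Y : α → E} {Z : ℕ → α → E}
    (hX : AEStronglyMeasurable X μ) (hY : AEStronglyMeasurable Y μ)
    (hZ : ∀ n, AEStronglyMeasurable (Z n) μ)
    (hlim : ∀ᵐ a ∂μ, Tendsto (fun n => Z n a) atTop (𝓝 (Y a)))
    (hlaw : ∀ n, μ.map (fun a => X a - Z n a) = μ.map (fun a => Y a - Z n a)) :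
    X =ᵐ[μ] Y := by
  have hYZ : TendstoInMeasure μ (fun n a => Y a - Z n a) atTop fun _ => 0 :=
    tendstoInMeasure_of_tendsto_ae (fun n => hY.sub (hZ n)) <| by
      filter_upwards [hlim] with a ha
      simpa using (tendsto_const_nhds (x := Y a)).sub ha
  have hXZ_zero : TendstoInMeasure μ (fun n a => X a - Z n a) atTop fun _ => 0 :=
    tendstoInMeasure_const_of_map_eq (fun n => (hX.sub (hZ n)).aemeasurable)
      (fun n => (hY.sub (hZ n)).aemeasurable) hlaw hYZ
  have hXZ : TendstoInMeasure μ (fun n a => X a - Z n a) atTop fun a => X a - Y a :=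
    tendstoInMeasure_of_tendsto_ae (fun n => hX.sub (hZ n)) <| by
      filter_upwards [hlim] with a ha
      exact tendsto_const_nhds.sub ha
  filter_upwards [tendstoInMeasure_ae_unique hXZ hXZ_zero] with a ha
  exact sub_eq_zero.mp ha

end ConvergenceInMeasure

section FDDInvariance

variable {Ω X E : Type*} [MeasurableSpace Ω] [MeasurableSpace E]

def IsFDDInvariant (P : Measure Ω) (Φ : X → Ω → E) (g : X → X) : Prop :=
  ∀ (n : ℕ) (p : Fin n → X),
    P.map (fun ω (i : Fin n) => Φ (g (p i)) ω) = P.map (fun ω (i : Fin n) => Φ (p i) ω)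

theorem IsFDDInvariant.map_sub_eq [AddGroup E] [MeasurableSub₂ E] {P : Measure Ω}
    {Φ : X → Ω → E} {g : X → X} (h : IsFDDInvariant P Φ g) (hΦ : ∀ p, Measurable (Φ p))
    (p q : X) :
    P.map (fun ω => Φ (g p) ω - Φ (g q) ω) = P.map (fun ω => Φ p ω - Φ q ω) := by
  have hsub : Measurable fun f : Fin 2 → E => f 0 - f 1 :=
    (measurable_pi_apply 0).sub (measurable_pi_apply 1)
  have := congrArg (Measure.map fun f : Fin 2 → E => f 0 - f 1) (h 2 ![p, q])
  rwa [Measure.map_map hsub (measurable_pi_lambda _ fun i => hΦ _),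
    Measure.map_map hsub (measurable_pi_lambda _ fun i => hΦ _)] at this

end FDDInvariance

section GalileiBoost

variable {V : Type*} [AddCommGroup V] [Module ℝ V]

def galileiBoost (v b : V) (p : V × ℝ) : V × ℝ := (p.1 + p.2 • v + b, p.2)

theorem exists_galileiBoost_eq (x : V) {s t : ℝ} (hst : s ≠ t) :
    ∃ v b, galileiBoost v b (0, t) = (x, t) ∧ galileiBoost v b (0, s) = (0, s) := by
  refine ⟨(t - s)⁻¹ • x, -(s • (t - s)⁻¹ • x), ?_, by simp [galileiBoost]⟩
  have hts : t - s ≠ 0 := sub_ne_zero.mpr hst.symm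
  simp only [galileiBoost, zero_add, Prod.mk.injEq, and_true]
  rw [← sub_eq_add_neg, ← sub_smul, smul_smul, mul_inv_cancel₀ hts, one_smul]

end GalileiBoost

theorem galilei_invariant_gaussian_field_has_no_space_dependence_general
    {Ω : Type*} [MeasurableSpace Ω] (P : Measure Ω) [IsProbabilityMeasure P]
    (Φ : ((Fin 3 → ℝ) × ℝ) → Ω → ℝ)
    (hmeas : ∀ p, Measurable (Φ p))
    -- almost surely continuous sample paths
    (hpaths : ∀ᵐ ω ∂P, Continuous fun p => Φ p ω)
    -- invariance of the finite-dimensional distributions under the Galilei group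
    (hinv : ∀ (A : Matrix (Fin 3) (Fin 3) ℝ), A * Aᵀ = 1 → A.det = 1 →
      ∀ (v b : Fin 3 → ℝ) (s : ℝ) (n : ℕ) (p : Fin n → (Fin 3 → ℝ) × ℝ),
        Measure.map
          (fun ω (i : Fin n) =>
            Φ (A.mulVec (p i).1 + (p i).2 • v + b, (p i).2 + s) ω) P =
          Measure.map (fun ω (i : Fin n) => Φ (p i) ω) P) :
    ∀ (x : Fin 3 → ℝ) (t : ℝ), ∀ᵐ ω ∂P, Φ (x, t) ω = Φ (0, t) ω := by
  intro x t
  have hboost (v b : Fin 3 → ℝ) : IsFDDInvariant P Φ (galileiBoost v b) := fun n p => by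
    simpa [galileiBoost] using hinv 1 (by simp) (by simp) v b 0 n p
  set s : ℕ → ℝ := fun n => t + 1 / (n + 1)
  have hs : Tendsto s atTop (𝓝 t) := by
    simpa [s] using (tendsto_const_nhds (x := t)).add (tendsto_one_div_add_atTop_nhds_zero_nat (𝕜 := ℝ))
  have hst (n : ℕ) : s n ≠ t := by
    simp only [s, ne_eq, add_eq_left]
    positivity
  refine ae_eq_of_map_sub_eq_of_tendsto_ae (Z := fun n => Φ (0, s n))
    (hmeas _).aestronglyMeasurable (hmeas _).aestronglyMeasurable
    (fun n => (hmeas _).aestronglyMeasurable) ?_ fun n => ?_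
  · filter_upwards [hpaths] with ω hω
    exact (hω.tendsto _).comp (tendsto_const_nhds.prodMk_nhds hs)
  · obtain ⟨v, b, hx, h0⟩ := exists_galileiBoost_eq x (hst n)
    simpa [hx, h0] using (hboost v b).map_sub_eq hmeas (0, t) (0, s n)

/-- **Corollary 3.2.** A standard real-valued Gaussian random field on `ℝ³ × ℝ` with almost
surely continuous sample paths whose finite-dimensional distributions are invariant under the
Galilei group (affine maps `(x,t) ↦ (A x + t v + b, t + s)` with `A ∈ SO(3)`, `v, b ∈ ℝ³`,
`s ∈ ℝ`) loses all space dependence: `Φ(x,t) = Φ(0,t)` almost surely, for every `(x,t)`. -/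
theorem galilei_invariant_gaussian_field_has_no_space_dependence
    {Ω : Type*} [MeasurableSpace Ω] (P : Measure Ω) [IsProbabilityMeasure P]
    (Φ : ((Fin 3 → ℝ) × ℝ) → Ω → ℝ)
    (hmeas : ∀ p, Measurable (Φ p))
    -- Gaussian field: every finite real linear combination is a (possibly degenerate) Gaussian
    (hgauss : ∀ (n : ℕ) (p : Fin n → (Fin 3 → ℝ) × ℝ) (a : Fin n → ℝ),
      ∃ (m : ℝ) (v : ℝ≥0),
        Measure.map (fun ω => ∑ i, a i * Φ (p i) ω) P = gaussianReal m v)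
    -- standard: centered with unit variance
    (hcentered : ∀ p, ∫ ω, Φ p ω ∂P = 0)
    (hstd : ∀ p, ∫ ω, (Φ p ω) ^ 2 ∂P = 1)
    -- almost surely continuous sample paths
    (hpaths : ∀ᵐ ω ∂P, Continuous fun p => Φ p ω)
    -- invariance of the finite-dimensional distributions under the Galilei group
    (hinv : ∀ (A : Matrix (Fin 3) (Fin 3) ℝ), A * Aᵀ = 1 → A.det = 1 →
      ∀ (v b : Fin 3 → ℝ) (s : ℝ) (n : ℕ) (p : Fin n → (Fin 3 → ℝ) × ℝ),
        Measure.map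
          (fun ω (i : Fin n) =>
            Φ (A.mulVec (p i).1 + (p i).2 • v + b, (p i).2 + s) ω) P =
          Measure.map (fun ω (i : Fin n) => Φ (p i) ω) P) :
    ∀ (x : Fin 3 → ℝ) (t : ℝ), ∀ᵐ ω ∂P, Φ (x, t) ω = Φ (0, t) ω :=
  galilei_invariant_gaussian_field_has_no_space_dependence_general P Φ hmeas hpaths hinv
end

section
/- Let f : ℝⁿ → ℝ (n ≥ 1) be a twice continuously differentiable function which is invariant under the orthogonal group: f(g x) = f(x) for every g ∈ O(n) and x ∈ ℝⁿ. Then for every unit vector γ ∈ ℝⁿ, the second directional derivative of f at 0 along γ equals (1/n) ∑_{i=1}^n ∂²f/∂xᵢ²(0), i.e. it equals (1/n) times the Laplacian of f at the origin. -/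
open Matrix

/-! Invariance makes the restriction of `f` to the line through `γ` equal to its restriction to
any coordinate axis, since a reflection of `ℝⁿ` carries `eᵢ` to `γ`. Hence all the `n` pure second
partials at `0` coincide with the second directional derivative along `γ`, and so does their mean,
which is `1/n` times the Laplacian. -/

theorem exists_mul_transpose_eq_one_mulVec_eq {ι : Type*} [Fintype ι] [DecidableEq ι]
    (x y : ι → ℝ) (hxy : ∑ i, x i ^ 2 = ∑ i, y i ^ 2) :
    ∃ g : Matrix ι ι ℝ, g * gᵀ = 1 ∧ g *ᵥ x = y := by
  let b := EuclideanSpace.basisFun ι ℝ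
  have hnorm : ‖WithLp.toLp 2 x‖ = ‖WithLp.toLp 2 y‖ := by
    simp [EuclideanSpace.norm_eq, hxy]
  let T := Submodule.reflection (ℝ ∙ (WithLp.toLp 2 x - WithLp.toLp 2 y))ᗮ
  refine ⟨T.toLinearMap.toMatrix b.toBasis b.toBasis, ?_, ?_⟩
  · have := T.toMatrix_mem_unitaryGroup b b
    rwa [mem_unitaryGroup_iff, star_eq_conjTranspose, conjTranspose_eq_transpose_of_trivial]
      at this
  · exact (T.toLinearMap.toMatrix_mulVec_repr b.toBasis b.toBasis (WithLp.toLp 2 x)).trans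
      (congrArg WithLp.ofLp (Submodule.reflection_sub hnorm))

theorem deriv_deriv_comp_smul {E F : Type*} [NormedAddCommGroup E] [NormedSpace ℝ E]
    [NormedAddCommGroup F] [NormedSpace ℝ F] {f : E → F} (hf : ContDiff ℝ 2 f) (v : E) (t : ℝ) :
    deriv (deriv fun s : ℝ => f (s • v)) t = fderiv ℝ (fun y => fderiv ℝ f y v) (t • v) v := by
  have hline : ∀ s : ℝ, HasDerivAt (fun s : ℝ => s • v) v s := fun s => by
    simpa using (hasDerivAt_id s).smul_const v
  have hfirst : deriv (fun s : ℝ => f (s • v)) = fun s => fderiv ℝ f (s • v) v := funext fun s =>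
    ((hf.differentiable two_ne_zero _).hasFDerivAt.comp_hasDerivAt s (hline s)).deriv
  have hdir : Differentiable ℝ fun y => fderiv ℝ f y v :=
    ((hf.fderiv_right one_add_one_eq_two.le).differentiable one_ne_zero).clm_apply
      (differentiable_const v)
  rw [hfirst]
  exact ((hdir _).hasFDerivAt.comp_hasDerivAt t (hline t)).deriv

/-- **Key computation in the proof of Proposition 4.1.** If `f : ℝⁿ → ℝ` is `C²` and invariant
under the orthogonal group `O(n)`, then for every unit vector `γ` the second directional
derivative of `f` at `0` along `γ` equals `(1/n)` times the Laplacian of `f` at the origin. -/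
theorem second_directional_derivative_of_orthogonally_invariant_function
    (n : ℕ) (hn : 1 ≤ n)
    (f : (Fin n → ℝ) → ℝ) (hf : ContDiff ℝ 2 f)
    (hinv : ∀ g : Matrix (Fin n) (Fin n) ℝ, g * gᵀ = 1 → ∀ x, f (g.mulVec x) = f x)
    (γ : Fin n → ℝ) (hγ : ∑ i, γ i ^ 2 = 1) :
    deriv (deriv fun t : ℝ => f (t • γ)) 0 =
      (1 / (n : ℝ)) *
        ∑ i : Fin n,
          fderiv ℝ (fun y => fderiv ℝ f y (Pi.single i 1)) 0 (Pi.single i 1) := by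
  have hpartial : ∀ i : Fin n,
      fderiv ℝ (fun y => fderiv ℝ f y (Pi.single i 1)) 0 (Pi.single i 1) =
        deriv (deriv fun t : ℝ => f (t • γ)) 0 := by
    intro i
    obtain ⟨g, hg, hgi⟩ := exists_mul_transpose_eq_one_mulVec_eq (Pi.single i 1) γ
      (by simp [hγ, Pi.single_apply])
    have hline : (fun t : ℝ => f (t • γ)) = fun t => f (t • Pi.single i 1) := by
      funext t
      rw [← hgi, ← mulVec_smul, hinv g hg]
    rw [hline, deriv_deriv_comp_smul hf, zero_smul]
  have hn' : (n : ℝ) ≠ 0 := Nat.cast_ne_zero.mpr (by omega)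
  rw [Finset.sum_congr rfl fun i _ => hpartial i, Finset.sum_const, Finset.card_univ,
    Fintype.card_fin, nsmul_eq_mul, one_div, inv_mul_cancel_left₀ hn']
end

section
/- Let k ≤ n and let M be a real matrix with k rows and n columns, with rows m₁, …, m_k ∈ ℝⁿ. Let P = { ∑_{i=1}^k tᵢ mᵢ : t₁, …, t_k ∈ [0,1] } be the parallelotope spanned by the rows. Then det(M Mᵀ) equals the square of the k-dimensional Hausdorff measure of P (with the Hausdorff measure normalized so that it agrees with Lebesgue measure on k-dimensional affine subspaces). -/
/-!
Lift the rows `mᵢ` of `M` along `J` to vectors `xᵢ` of `ℝᵏ`. Since `J` is an injective linear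
isometry, `J ⁻¹' P` is the parallelepiped spanned by the `xᵢ` and the Gram matrices of the two
families agree. In `ℝᵏ`, with `X` the matrix of the `xᵢ` in an orthonormal basis, the Gram matrix
is `Xᵀ X` while the parallelepiped has volume `|det X|`.
-/

open MeasureTheory Matrix

theorem self_mem_parallelepiped {ι E : Type*} [Fintype ι] [DecidableEq ι] [AddCommGroup E]
    [Module ℝ E] (v : ι → E) (i : ι) : v i ∈ parallelepiped v := by
  refine (mem_parallelepiped_iff v _).2 ⟨Pi.single i 1, ⟨Pi.single_nonneg.2 zero_le_one, ?_⟩, ?_⟩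
  · intro j
    by_cases j = i <;> simp [*]
  · simp [Pi.single_apply]

theorem LinearIsometry.preimage_parallelepiped_comp {ι E F : Type*} [Fintype ι]
    [NormedAddCommGroup E] [InnerProductSpace ℝ E] [NormedAddCommGroup F] [InnerProductSpace ℝ F]
    (J : E →ₗᵢ[ℝ] F) (v : ι → E) : J ⁻¹' parallelepiped (J ∘ v) = parallelepiped v := by
  rw [← J.coe_toLinearMap, ← image_parallelepiped]
  exact Set.preimage_image_eq _ J.injective

theorem LinearIsometry.gram_comp {ι E F : Type*} [NormedAddCommGroup E] [InnerProductSpace ℝ E]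
    [NormedAddCommGroup F] [InnerProductSpace ℝ F] (J : E →ₗᵢ[ℝ] F) (v : ι → E) :
    gram ℝ (J ∘ v) = gram ℝ v := by
  ext i j
  simp [gram_apply]

section OrthonormalBasis

variable {ι F : Type*} [Fintype ι] [DecidableEq ι] [NormedAddCommGroup F] [InnerProductSpace ℝ F]

theorem OrthonormalBasis.det_gram_eq_det_sq (b : OrthonormalBasis ι ℝ F) (v : ι → F) :
    (gram ℝ v).det = b.toBasis.det v ^ 2 := by
  rw [gram_eq_conjTranspose_mul b, det_mul, det_conjTranspose, Module.Basis.det_apply, sq]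
  rfl

variable [FiniteDimensional ℝ F] [MeasurableSpace F] [BorelSpace F]

theorem OrthonormalBasis.volume_parallelepiped_eq_abs_det (b : OrthonormalBasis ι ℝ F)
    (v : ι → F) : volume (parallelepiped v) = ENNReal.ofReal |b.toBasis.det v| := by
  rw [← b.addHaar_eq_volume, Measure.addHaar_parallelepiped]

theorem det_gram_eq_volume_parallelepiped_sq (h : Module.finrank ℝ F = Fintype.card ι)
    (v : ι → F) : (gram ℝ v).det = (volume (parallelepiped v)).toReal ^ 2 := by
  let b := (stdOrthonormalBasis ℝ F).reindex ((finCongr h).trans (Fintype.equivFin ι).symm)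
  rw [b.det_gram_eq_det_sq, b.volume_parallelepiped_eq_abs_det,
    ENNReal.toReal_ofReal (abs_nonneg _), sq_abs]

end OrthonormalBasis

theorem gram_toLp_rows {m n : Type*} [Fintype n] (M : Matrix m n ℝ) :
    gram ℝ (fun i => WithLp.toLp 2 (M i) : m → EuclideanSpace ℝ n) = M * Mᵀ := by
  ext i j
  simp [gram_apply, mul_apply, PiLp.inner_apply, mul_comm]

theorem mem_parallelepiped_toLp_rows_iff {m n : Type*} [Fintype m] (M : Matrix m n ℝ)
    (y : EuclideanSpace ℝ n) :
    y ∈ parallelepiped (fun i => WithLp.toLp 2 (M i)) ↔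
      ∃ t : m → ℝ, (∀ i, t i ∈ Set.Icc (0 : ℝ) 1) ∧ ∀ j, y j = ∑ i, t i * M i j := by
  simp [mem_parallelepiped_iff, Set.mem_Icc, Pi.le_def, PiLp.ext_iff, forall_and]

theorem gram_determinant_eq_squared_volume_of_parallelotope_general
    (k n : ℕ) (M : Matrix (Fin k) (Fin n) ℝ)
    (P : Set (EuclideanSpace ℝ (Fin n)))
    (hP : P = {y | ∃ t : Fin k → ℝ, (∀ i, t i ∈ Set.Icc (0 : ℝ) 1) ∧
      ∀ j, y j = ∑ i, t i * M i j})
    (J : EuclideanSpace ℝ (Fin k) →ₗᵢ[ℝ] EuclideanSpace ℝ (Fin n))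
    (hJ : P ⊆ Set.range J) :
    (M * Mᵀ).det = ((volume (J ⁻¹' P)).toReal) ^ 2 := by
  have hPr : P = parallelepiped fun i => WithLp.toLp 2 (M i) :=
    hP ▸ Set.ext fun y => (mem_parallelepiped_toLp_rows_iff M y).symm
  choose x hx using fun i => hJ (hPr ▸ self_mem_parallelepiped _ i)
  have hrows : (fun i => WithLp.toLp 2 (M i)) = J ∘ x := funext fun i => (hx i).symm
  rw [← gram_toLp_rows M, hPr, hrows, J.gram_comp, J.preimage_parallelepiped_comp,
    det_gram_eq_volume_parallelepiped_sq (by simp)]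

/-- **Lemma 5.2.** Let `M` be a real `k × n` matrix with `k ≤ n`, with rows `m₁, …, m_k`, and
let `P = {∑ tᵢ mᵢ : tᵢ ∈ [0,1]}` be the parallelotope spanned by the rows, viewed in Euclidean
`ℝⁿ`.  Then `det (M Mᵀ)` is the square of the `k`-dimensional volume of `P`, where the
`k`-dimensional volume (the Hausdorff measure normalized to agree with Lebesgue measure on
`k`-dimensional affine subspaces) is computed as the Lebesgue measure of the preimage of `P`
under any linear isometry of Euclidean `ℝᵏ` into Euclidean `ℝⁿ` whose range contains `P`. -/
theorem gram_determinant_eq_squared_volume_of_parallelotope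
    (k n : ℕ) (hkn : k ≤ n) (M : Matrix (Fin k) (Fin n) ℝ)
    (P : Set (EuclideanSpace ℝ (Fin n)))
    (hP : P = {y | ∃ t : Fin k → ℝ, (∀ i, t i ∈ Set.Icc (0 : ℝ) 1) ∧
      ∀ j, y j = ∑ i, t i * M i j})
    (J : EuclideanSpace ℝ (Fin k) →ₗᵢ[ℝ] EuclideanSpace ℝ (Fin n))
    (hJ : P ⊆ Set.range J) :
    (M * Mᵀ).det = ((volume (J ⁻¹' P)).toReal) ^ 2 :=
  gram_determinant_eq_squared_volume_of_parallelotope_general k n M P hP J hJ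
end

section
/- Let k ≤ n and let u₁, …, u_k be independent random vectors in ℝⁿ, where uᵢ is a centered Gaussian vector with covariance matrix αᵢ² Iₙ (i.e. its n coordinates are independent centered Gaussians of variance αᵢ²), with αᵢ > 0. Let G be the random k × k Gram matrix with entries Gᵢⱼ = ⟨uᵢ, uⱼ⟩. Then the expected value of det G — that is, the expected squared k-dimensional volume of the random parallelotope { ∑ tᵢ uᵢ : tᵢ ∈ [0,1] } — equals (n!/(n−k)!) · ∏_{i=1}^k αᵢ². -/
open MeasureTheory ProbabilityTheory Matrix
open scoped NNReal

/-!
Expanding the determinant over permutations `σ` and each entry `⟨uᵢ, uⱼ⟩` over coordinates,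
`det G` becomes a sum over maps `f : Fin k → Fin n` of signed monomials that are quadratic in
each row `uᵢ`. By independence the expectation of such a monomial factors over the rows, and
row `i` contributes `αᵢ²` if its two coordinates `f (σ⁻¹ i)` and `f i` agree and `0` otherwise.
For fixed `f` the remaining signed sum over `σ` is the determinant of the `0/1` matrix
`[f i = f j]`, which is `1` if `f` is injective and has two equal rows otherwise; and there are
`n!/(n-k)!` injective maps `f`.
-/

lemma integral_sq_gaussianReal_zero (v : ℝ≥0) : ∫ x, x ^ 2 ∂gaussianReal 0 v = v := by
  have h := variance_of_integral_eq_zero aemeasurable_id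
    (integral_id_gaussianReal (μ := 0) (v := v))
  simpa [variance_id_gaussianReal] using h.symm

section PiGaussian

variable {ι : Type*} [Fintype ι] (v : ι → ℝ≥0)

lemma memLp_eval_pi_gaussianReal (a : ι) :
    MemLp (fun y : ι → ℝ => y a) 2 (Measure.pi fun l => gaussianReal 0 (v l)) :=
  (memLp_id_gaussianReal 2).comp_measurePreserving (measurePreserving_eval _ a)

lemma integrable_eval_mul_eval_pi_gaussianReal (a b : ι) :
    Integrable (fun y : ι → ℝ => y a * y b) (Measure.pi fun l => gaussianReal 0 (v l)) :=
  (memLp_eval_pi_gaussianReal v a).integrable_mul (memLp_eval_pi_gaussianReal v b)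

lemma integral_eval_mul_eval_pi_gaussianReal [DecidableEq ι] (a b : ι) :
    ∫ y, y a * y b ∂Measure.pi (fun l => gaussianReal 0 (v l)) =
      if a = b then (v a : ℝ) else 0 := by
  split_ifs with hab
  · subst hab
    simp_rw [← sq]
    rw [integral_comp_eval (μ := fun l => gaussianReal 0 (v l)) (f := fun t : ℝ => t ^ 2)
      (by fun_prop), integral_sq_gaussianReal_zero]
  · have hindep := (iIndepFun_pi (X := fun _ t => t) (μ := fun l => gaussianReal 0 (v l))
      fun _ => aemeasurable_id).indepFun hab
    rw [hindep.integral_fun_mul_eq_mul_integral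
      (memLp_eval_pi_gaussianReal v a).aestronglyMeasurable
      (memLp_eval_pi_gaussianReal v b).aestronglyMeasurable,
      integral_eval, integral_id_gaussianReal, zero_mul]

end PiGaussian

section Determinant

open Equiv Finset Function

variable {R ι κ : Type*} [CommRing R] [Fintype ι] [DecidableEq ι]

lemma det_gram_eq_sum [Fintype κ] (x : ι → κ → R) :
    (of fun i j => ∑ l, x i l * x j l).det =
      ∑ f : ι → κ, ∑ σ : Perm ι, (Perm.sign σ : R) * ∏ i, x i (f (σ⁻¹ i)) * x i (f i) := by
  rw [det_apply', sum_comm]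
  refine sum_congr rfl fun σ _ => ?_
  simp only [of_apply]
  rw [Fintype.prod_sum, mul_sum]
  refine sum_congr rfl fun f _ => ?_
  rw [prod_mul_distrib, prod_mul_distrib, ← Equiv.prod_comp σ (fun i => x i (f (σ⁻¹ i)))]
  simp

lemma det_ite_apply_eq_apply [DecidableEq κ] (f : ι → κ) :
    (of fun i j => if f i = f j then (1 : R) else 0).det = if Injective f then 1 else 0 := by
  split_ifs with hf
  · rw [← det_one (n := ι) (R := R)]
    congr 1
    ext i j
    simp [one_apply, hf.eq_iff]
  · obtain ⟨i, j, hfij, hij⟩ : ∃ i j, f i = f j ∧ i ≠ j := by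
      simpa [Injective] using hf
    exact det_zero_of_row_eq hij (funext fun l => by simp [hfij])

lemma sum_sign_mul_prod_ite_apply_inv_eq [DecidableEq κ] (f : ι → κ) :
    ∑ σ : Perm ι, (Perm.sign σ : R) * ∏ i, (if f (σ⁻¹ i) = f i then 1 else 0) =
      if Injective f then 1 else 0 := by
  rw [← det_ite_apply_eq_apply, det_apply']
  refine sum_congr rfl fun σ _ => ?_
  rw [← Equiv.prod_comp σ]
  simp [eq_comm]

end Determinant

section GaussianMatrix

open Equiv Finset Function

variable {ι κ : Type*} [Fintype ι] [Fintype κ] (v : ι → ℝ≥0)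

lemma integrable_prod_entry_mul_entry_pi_gaussianReal (g h : ι → κ) :
    Integrable (fun x : ι → κ → ℝ => ∏ i, x i (g i) * x i (h i))
      (Measure.pi fun i => Measure.pi fun _ : κ => gaussianReal 0 (v i)) :=
  Integrable.fintype_prod fun i => integrable_eval_mul_eval_pi_gaussianReal (fun _ => v i) _ _

lemma integral_prod_entry_mul_entry_pi_gaussianReal [DecidableEq κ] (g h : ι → κ) :
    ∫ x : ι → κ → ℝ, ∏ i, x i (g i) * x i (h i)
        ∂(Measure.pi fun i => Measure.pi fun _ : κ => gaussianReal 0 (v i)) =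
      ∏ i, if g i = h i then (v i : ℝ) else 0 := by
  rw [integral_fintype_prod_eq_prod (fun i (y : κ → ℝ) => y (g i) * y (h i))]
  exact prod_congr rfl fun i _ => integral_eval_mul_eval_pi_gaussianReal (fun _ => v i) _ _

lemma integral_det_gram_pi_gaussianReal [DecidableEq ι] :
    ∫ x : ι → κ → ℝ, (of fun i j => ∑ l, x i l * x j l).det
        ∂(Measure.pi fun i => Measure.pi fun _ : κ => gaussianReal 0 (v i)) =
      (Fintype.card κ).descFactorial (Fintype.card ι) * ∏ i, (v i : ℝ) := by
  classical
  calc _ = ∑ f : ι → κ, ∑ σ : Perm ι,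
        (Perm.sign σ : ℝ) * ∏ i, if f (σ⁻¹ i) = f i then (v i : ℝ) else 0 := by
        simp_rw [det_gram_eq_sum]
        rw [integral_finsetSum _ fun f _ => integrable_finsetSum _ fun σ _ =>
          (integrable_prod_entry_mul_entry_pi_gaussianReal v _ f).const_mul _]
        refine sum_congr rfl fun f _ => ?_
        rw [integral_finsetSum _ fun σ _ =>
          (integrable_prod_entry_mul_entry_pi_gaussianReal v _ f).const_mul _]
        refine sum_congr rfl fun σ _ => ?_
        rw [integral_const_mul, integral_prod_entry_mul_entry_pi_gaussianReal]
    _ = ∑ f : ι → κ, (if Injective f then 1 else 0) * ∏ i, (v i : ℝ) := by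
        refine sum_congr rfl fun f _ => ?_
        rw [← sum_sign_mul_prod_ite_apply_inv_eq, sum_mul]
        refine sum_congr rfl fun σ _ => ?_
        rw [mul_assoc, ← prod_mul_distrib]
        simp only [ite_mul, one_mul, zero_mul]
    _ = _ := by
        rw [← sum_mul, sum_boole, ← Fintype.card_subtype,
          Fintype.card_congr (Equiv.subtypeInjectiveEquivEmbedding ι κ),
          Fintype.card_embedding_eq]

end GaussianMatrix

theorem expected_gram_determinant_of_isotropic_gaussians_general
    (k n : ℕ)
    {Ω : Type*} [MeasurableSpace Ω] (P : Measure Ω) [IsProbabilityMeasure P]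
    (u : Fin k → Ω → (Fin n → ℝ))
    -- the vectors are independent
    (hindep : iIndepFun u P)
    -- each `uᵢ` has independent centered Gaussian coordinates of variance `αᵢ²`
    (α : Fin k → ℝ≥0)
    (hlaw : ∀ i, Measure.map (u i) P = Measure.pi fun _ : Fin n => gaussianReal 0 (α i ^ 2)) :
    ∫ ω, (Matrix.of fun i j : Fin k => ∑ l, u i ω l * u j ω l).det ∂P =
      (n.descFactorial k : ℝ) * ∏ i, (α i : ℝ) ^ 2 := by
  have hu : ∀ i, AEMeasurable (u i) P := fun i =>
    .of_map_ne_zero (by rw [hlaw i]; exact IsProbabilityMeasure.ne_zero _)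
  have hjoint : P.map (fun ω i => u i ω) =
      Measure.pi fun i => Measure.pi fun _ : Fin n => gaussianReal 0 (α i ^ 2) := by
    rw [(iIndepFun_iff_map_fun_eq_pi_map hu).1 hindep]
    simp_rw [hlaw]
  have hdet : Continuous fun x : Fin k → Fin n → ℝ => (of fun i j => ∑ l, x i l * x j l).det := by
    fun_prop
  rw [← integral_map (aemeasurable_pi_lambda _ hu) hdet.aestronglyMeasurable, hjoint,
    integral_det_gram_pi_gaussianReal]
  simp

/-- **Lemma 5.3 (expected squared volume of a Gaussian parallelotope).** Let `u₁, …, u_k` be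
independent random vectors in `ℝⁿ` (`k ≤ n`), `uᵢ` centered Gaussian with covariance matrix
`αᵢ² Iₙ`.  Then the expected determinant of the Gram matrix `(⟨uᵢ, uⱼ⟩)ᵢⱼ` — the expected
squared `k`-dimensional volume of the parallelotope spanned by `u₁, …, u_k` — equals
`(n!/(n-k)!) ∏ᵢ αᵢ²`. -/
theorem expected_gram_determinant_of_isotropic_gaussians
    (k n : ℕ) (hkn : k ≤ n)
    {Ω : Type*} [MeasurableSpace Ω] (P : Measure Ω) [IsProbabilityMeasure P]
    (u : Fin k → Ω → (Fin n → ℝ))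
    (hmeas : ∀ i, Measurable (u i))
    -- the vectors are independent
    (hindep : iIndepFun u P)
    -- each `uᵢ` has independent centered Gaussian coordinates of variance `αᵢ²`
    (α : Fin k → ℝ≥0) (hα : ∀ i, 0 < α i)
    (hlaw : ∀ i, Measure.map (u i) P = Measure.pi fun _ : Fin n => gaussianReal 0 (α i ^ 2)) :
    ∫ ω, (Matrix.of fun i j : Fin k => ∑ l, u i ω l * u j ω l).det ∂P =
      (n.descFactorial k : ℝ) * ∏ i, (α i : ℝ) ^ 2 :=
  expected_gram_determinant_of_isotropic_gaussians_general k n P u hindep α hlaw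
end
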